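/- There exists a constant c such that for all binary strings a, b and every natural number n with C(a,b) ≤ n: C(b | a, n) ≤ log₂(N_a) + c, where N_a is the number of binary strings y with C(a,y) ≤ n. -/

import Mathlib

/-- Binary strings. -/
abbrev BinStr := List Bool

/-- Standard encoding of a binary string as a natural number. -/
def enc (a : BinStr) : ℕ := Encodable.encode a

/-- A (conditional) machine: it takes a program (a binary string) and a condition
(a natural number, which encodes the conditioning data: a number, a string via `enc`,
or a tuple combined with the standard pairing `Nat.pair`) and possibly outputs a
natural number (encoding the result in the same way). -/
abbrev Machine := BinStr → ℕ →. ℕ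

/-- Conditional Kolmogorov complexity of `x` given condition `y`, with respect to the
machine `U`: the minimal length of a program `p` such that `U p y = x`. -/
noncomputable def cplx (U : Machine) (x y : ℕ) : ℕ :=
  sInf {n | ∃ p : BinStr, p.length = n ∧ x ∈ U p y}

/-- Unconditional Kolmogorov complexity: conditional complexity with the trivial
condition `0`. -/
noncomputable def cplx0 (U : Machine) (x : ℕ) : ℕ := cplx U x 0

/-- `U` is an optimal universal machine for plain complexity: it is partial computable
and simulates every partial computable machine with at most a constant overhead in
program length. -/
def IsOptimal (U : Machine) : Prop :=
  Partrec₂ U ∧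
    ∀ V : Machine, Partrec₂ V →
      ∃ c : ℕ, ∀ (p : BinStr) (y x : ℕ), x ∈ V p y →
        ∃ q : BinStr, q.length ≤ p.length + c ∧ x ∈ U q y

/-- A machine is prefix-free if, for every condition, the set of its halting programs
is prefix-free: no halting program is a proper prefix of another halting program. -/
def PrefixFreeMachine (M : Machine) : Prop :=
  ∀ (y : ℕ) (p q : BinStr), p <+: q → (M p y).Dom → (M q y).Dom → p = q

/-- `U` is an optimal universal prefix-free machine: it is partial computable,
prefix-free, and simulates every partial computable prefix-free machine with at most
a constant overhead in program length. -/
def IsPrefixOptimal (U : Machine) : Prop :=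
  Partrec₂ U ∧ PrefixFreeMachine U ∧
    ∀ V : Machine, Partrec₂ V → PrefixFreeMachine V →
      ∃ c : ℕ, ∀ (p : BinStr) (y x : ℕ), x ∈ V p y →
        ∃ q : BinStr, q.length ≤ p.length + c ∧ x ∈ U q y

/-!
Uniformly in `⟨a, n⟩`, enumerate without repetition the strings `y` for which some program of
length at most `n` prints `⟨a, y⟩`. There are `N_a` of them and `b` is one, so `b` is determined
by `a`, `n` and its position `i < N_a` in the enumeration; in bijective binary numeration `i`
takes `⌊log₂ N_a⌋` bits. Optimality of `U` turns this description into a `U`-program with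
constant overhead.
-/

-- Bijective base-2 numeration: the strings of length `L` are sent onto `[2^L - 1, 2^(L+1) - 1)`.
def binIndex (p : BinStr) : ℕ := p.foldr (fun b n => 2 * n + cond b 2 1) 0

theorem primrec_binIndex : Primrec binIndex :=
  Primrec.list_foldr .id (.const 0)
    (Primrec.nat_add.comp (Primrec.nat_mul.comp (.const 2) (Primrec.snd.comp .snd))
      (Primrec.cond (Primrec.fst.comp .snd) (.const 2) (.const 1))).to₂

theorem exists_binIndex_eq_of_lt {L i : ℕ} (hlo : 2 ^ L ≤ i + 1) (hhi : i + 1 < 2 ^ (L + 1)) :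
    ∃ p : BinStr, p.length = L ∧ binIndex p = i := by
  induction L generalizing i with
  | zero => exact ⟨[], rfl, by simp at hhi; simp [binIndex]; omega⟩
  | succ L ih =>
    have h2 : 2 ^ (L + 1) = 2 * 2 ^ L := by ring
    have h3 : 2 ^ (L + 1 + 1) = 2 * 2 ^ (L + 1) := by ring
    obtain ⟨p, hp, hpi⟩ := ih (i := (i - 1) / 2) (by omega) (by omega)
    refine ⟨decide (i % 2 = 0) :: p, by simp [hp], ?_⟩
    simp only [binIndex, List.foldr_cons] at hpi ⊢
    rw [hpi]
    rcases Nat.mod_two_eq_zero_or_one i with h | h <;> simp [h] <;> omega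

theorem exists_binIndex_eq (i : ℕ) :
    ∃ p : BinStr, p.length = Nat.log 2 (i + 1) ∧ binIndex p = i :=
  exists_binIndex_eq_of_lt (Nat.pow_log_le_self 2 i.succ_ne_zero)
    (Nat.lt_pow_succ_log_self one_lt_two _)

section ListUnion

variable {α : Type*} [Primcodable α] [DecidableEq α]

theorem Primrec.list_insert : Primrec₂ (List.insert : α → List α → List α) := by
  have hmem : PrimrecRel fun (a : α) (l : List α) => a ∈ l :=
    ((PrimrecRel.exists_mem_list (Primrec.eq (α := α))).comp Primrec.snd Primrec.fst).of_eq
      fun _ => by simp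
  refine Primrec₂.of_eq (Primrec.ite hmem Primrec.snd (Primrec.list_cons.comp .fst .snd)).to₂
    fun a l => ?_
  by_cases h : a ∈ l <;> simp [h]

theorem Primrec.list_union : Primrec₂ ((· ∪ ·) : List α → List α → List α) :=
  Primrec₂.of_eq (Primrec.list_foldr .fst .snd (Primrec.list_insert.comp
    (Primrec.fst.comp .snd) (Primrec.snd.comp .snd)).to₂).to₂
    fun l₁ l₂ => (List.union_def l₁ l₂).symm

end ListUnion

section IndexMachine

variable (g : ℕ → ℕ → List ℕ)

-- The distinct values found by stage `s`, latest first. Reversed, these lists only grow at the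
-- end, so a value keeps its position from the stage where it is found on.
def foundUpTo (z s : ℕ) : List ℕ := ((List.range (s + 1)).flatMap (g z)).reverse ∪ []

def indexMachine : Machine := fun p z =>
  Nat.rfindOpt fun s => (foundUpTo g z s).reverse[binIndex p]?

variable {g}

theorem foundUpTo_suffix (z : ℕ) {s t : ℕ} (h : s ≤ t) :
    foundUpTo g z s <:+ foundUpTo g z t := by
  obtain ⟨k, rfl⟩ := Nat.exists_eq_add_of_le h
  unfold foundUpTo
  conv_rhs => rw [Nat.add_right_comm, List.range_add, List.flatMap_append, List.reverse_append,
    List.union_def, List.foldr_append, ← List.union_def, ← List.union_def]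
  exact List.suffix_union_right _ _

theorem nodup_foundUpTo (z s : ℕ) : (foundUpTo g z s).Nodup :=
  List.Nodup.union _ List.nodup_nil

theorem mem_foundUpTo {z s x : ℕ} : x ∈ foundUpTo g z s ↔ ∃ t ≤ s, x ∈ g z t := by
  simp [foundUpTo]

theorem primrec₂_foundUpTo (hg : Primrec₂ g) : Primrec₂ (foundUpTo g) :=
  ((Primrec.list_union (α := ℕ)).comp (Primrec.list_reverse.comp
    (Primrec.list_flatMap (Primrec.list_range.comp (Primrec.succ.comp .snd))
      (hg.comp (Primrec.fst.comp .fst) .snd).to₂)) (.const [])).to₂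

theorem partrec₂_indexMachine (hg : Primrec₂ g) : Partrec₂ (indexMachine g) :=
  Partrec.rfindOpt (Primrec.list_getElem?.comp (Primrec.list_reverse.comp
    ((primrec₂_foundUpTo hg).comp (Primrec.snd.comp .fst) .snd))
    (primrec_binIndex.comp (Primrec.fst.comp .fst))).to_comp

theorem mem_indexMachine {p : BinStr} {z s x : ℕ}
    (h : (foundUpTo g z s).reverse[binIndex p]? = some x) : x ∈ indexMachine g p z := by
  refine (Nat.rfindOpt_mono fun {y m n} hmn hy => ?_).2 ⟨s, h⟩
  obtain ⟨t, ht⟩ := List.reverse_prefix.2 (foundUpTo_suffix z hmn)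
  simp only [Option.mem_def] at hy ⊢
  rw [← ht, List.getElem?_append_left (List.getElem?_eq_some_iff.1 hy).1, hy]

theorem exists_length_le_log_mem_indexMachine {z s x : ℕ} (hx : x ∈ g z s)
    (hfin : {w | ∃ t, w ∈ g z t}.Finite) :
    ∃ p : BinStr, p.length ≤ Nat.log 2 {w | ∃ t, w ∈ g z t}.ncard ∧
      x ∈ indexMachine g p z := by
  set L := (foundUpTo g z s).reverse
  have hxL : x ∈ L := List.mem_reverse.2 (mem_foundUpTo.2 ⟨s, le_rfl, hx⟩)
  have hlen : L.length ≤ {w | ∃ t, w ∈ g z t}.ncard := by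
    rw [← List.toFinset_card_of_nodup (List.nodup_reverse.2 (nodup_foundUpTo z s)),
      ← Set.ncard_coe_finset]
    refine Set.ncard_le_ncard (fun w hw => ?_) hfin
    obtain ⟨t, -, hwt⟩ := mem_foundUpTo.1 (List.mem_reverse.1 (List.mem_toFinset.1 hw))
    exact ⟨t, hwt⟩
  obtain ⟨p, hp, hpi⟩ := exists_binIndex_eq (L.idxOf x)
  refine ⟨p, hp ▸ Nat.log_mono_right ?_, mem_indexMachine (hpi ▸ List.getElem?_idxOf hxL)⟩
  have := List.idxOf_lt_length_iff.2 hxL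
  omega

end IndexMachine

open Nat.Partrec Code in
theorem Partrec₂.exists_primrec₂_stages {β : Type*} [Primcodable β] {F : ℕ → β →. ℕ}
    (hF : Partrec₂ F) :
    ∃ g : ℕ → ℕ → List ℕ, Primrec₂ g ∧
      ∀ z x, (∃ s, x ∈ g z s) ↔ ∃ b, x ∈ F z b := by
  obtain ⟨c, hc⟩ := exists_code.1 hF
  have heval : ∀ z k x, x ∈ c.eval (Nat.pair z k) ↔
      ∃ b, Encodable.decode k = some b ∧ x ∈ F z b := by
    intro z k x
    rw [hc]
    simp [Encodable.decode_prod_val]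
  refine ⟨fun z s => (List.range s).filterMap fun k => c.evaln s (Nat.pair z k), ?_,
    fun z x => ⟨?_, ?_⟩⟩
  · exact Primrec.listFilterMap (Primrec.list_range.comp .snd)
      (primrec_evaln.comp (((Primrec.snd.comp .fst).pair (.const c)).pair
        (Primrec₂.natPair.comp (Primrec.fst.comp .fst) .snd))).to₂
  · rintro ⟨s, hs⟩
    obtain ⟨k, -, hk⟩ := List.mem_filterMap.1 hs
    obtain ⟨b, -, hb⟩ := (heval z k x).1 (evaln_sound hk)
    exact ⟨b, hb⟩
  · rintro ⟨b, hb⟩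
    obtain ⟨s, hs⟩ := evaln_complete.1 ((heval z _ x).2 ⟨b, Encodable.encodek b, hb⟩)
    exact ⟨max s (Encodable.encode b + 1), List.mem_filterMap.2 ⟨Encodable.encode b,
      List.mem_range.2 (by omega), evaln_mono (le_max_left _ _) hs⟩⟩

theorem Partrec₂.exists_machine_length_le_log {β : Type*} [Primcodable β]
    {F : ℕ → β →. ℕ} (hF : Partrec₂ F) :
    ∃ V : Machine, Partrec₂ V ∧ ∀ (z : ℕ) (b : β) (x : ℕ), x ∈ F z b →
      {w | ∃ b, w ∈ F z b}.Finite →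
      ∃ p : BinStr, p.length ≤ Nat.log 2 {w | ∃ b, w ∈ F z b}.ncard ∧ x ∈ V p z := by
  obtain ⟨g, hg, hgF⟩ := hF.exists_primrec₂_stages
  have hset : ∀ z, {w | ∃ t, w ∈ g z t} = {w | ∃ b, w ∈ F z b} := fun z =>
    Set.ext fun w => hgF z w
  refine ⟨indexMachine g, partrec₂_indexMachine hg, fun z b x hx hfin => ?_⟩
  obtain ⟨s, hs⟩ := (hgF z x).2 ⟨b, hx⟩
  rw [← hset] at hfin ⊢
  exact exists_length_le_log_mem_indexMachine hs hfin

section Complexity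

variable {U : Machine}

theorem cplx_le_length {p : BinStr} {x z : ℕ} (h : x ∈ U p z) : cplx U x z ≤ p.length :=
  Nat.sInf_le ⟨p, rfl, h⟩

theorem finite_setOf_exists_length_le (M : Machine) (z n : ℕ) :
    {x | ∃ q : BinStr, q.length ≤ n ∧ x ∈ M q z}.Finite := by
  have hunion : {x | ∃ q : BinStr, q.length ≤ n ∧ x ∈ M q z} =
      ⋃ q ∈ {q : BinStr | q.length ≤ n}, {x | x ∈ M q z} := by
    ext; simp
  rw [hunion]
  exact (List.finite_length_le Bool n).biUnion fun q _ =>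
    Set.Subsingleton.finite fun _ hx _ hy => Part.mem_unique hx hy

namespace IsOptimal

theorem exists_mem (hU : IsOptimal U) (x z : ℕ) : ∃ q : BinStr, x ∈ U q z := by
  obtain ⟨c, hc⟩ := hU.2 (fun p _ => Part.some p.length)
    (Primrec.list_length.comp Primrec.fst).to_comp.partrec
  obtain ⟨q, -, hq⟩ := hc (List.replicate x false) z x (by simp)
  exact ⟨q, hq⟩

-- Without optimality, an `x` with no program at all would have `cplx U x z = sInf ∅ = 0`.
theorem cplx_le_iff (hU : IsOptimal U) {x z n : ℕ} :
    cplx U x z ≤ n ↔ ∃ q : BinStr, q.length ≤ n ∧ x ∈ U q z := by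
  refine ⟨fun h => ?_, fun ⟨q, hq, hx⟩ => (cplx_le_length hx).trans hq⟩
  obtain ⟨q, hq⟩ := hU.exists_mem x z
  have hne : {l | ∃ p : BinStr, p.length = l ∧ x ∈ U p z}.Nonempty :=
    ⟨q.length, q, rfl, hq⟩
  obtain ⟨p, hp, hx⟩ := Nat.sInf_mem hne
  exact ⟨p, hp ▸ h, hx⟩

theorem exists_cplx_le_log_ncard_add (hU : IsOptimal U) {β : Type*} [Primcodable β]
    {F : ℕ → β →. ℕ} (hF : Partrec₂ F) :
    ∃ c : ℕ, ∀ (z : ℕ) (b : β) (x : ℕ), x ∈ F z b →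
      {w | ∃ b, w ∈ F z b}.Finite →
      cplx U x z ≤ Nat.log 2 {w | ∃ b, w ∈ F z b}.ncard + c := by
  obtain ⟨V, hV, hVF⟩ := hF.exists_machine_length_le_log
  obtain ⟨c, hc⟩ := hU.2 V hV
  refine ⟨c, fun z b x hx hfin => ?_⟩
  obtain ⟨p, hp, hpx⟩ := hVF z b x hx hfin
  obtain ⟨q, hq, hqx⟩ := hc p z x hpx
  exact (cplx_le_length hqx).trans (by omega)

end IsOptimal

end Complexity

theorem enc_injective : Function.Injective enc := Encodable.encode_injective

def pairedOutput (U : Machine) (z : ℕ) (qy : BinStr × BinStr) : Part ℕ :=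
  (U qy.1 0).bind fun m => Part.ofOption <|
    if qy.1.length ≤ z.unpair.2 ∧ m = Nat.pair z.unpair.1 (enc qy.2) then some (enc qy.2)
    else none

theorem mem_pairedOutput {U : Machine} {z x : ℕ} {q y : BinStr} :
    x ∈ pairedOutput U z (q, y) ↔
      q.length ≤ z.unpair.2 ∧ Nat.pair z.unpair.1 (enc y) ∈ U q 0 ∧ x = enc y := by
  simp only [pairedOutput, Part.mem_bind_iff, Part.mem_ofOption, Option.mem_def,
    Option.ite_none_right_eq_some, Option.some.injEq]
  grind

theorem partrec₂_pairedOutput {U : Machine} (hU : Partrec₂ U) :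
    Partrec₂ (pairedOutput U) := by
  have henc : Primrec enc := Primrec.encode
  refine Partrec.bind (hU.comp (Computable.fst.comp .snd) (.const 0)) (Computable.ofOption ?_)
  refine (Primrec.ite (PrimrecPred.and ?_ ?_) (Primrec.option_some.comp ?_) (.const none)).to_comp
  · exact Primrec.nat_le.comp (Primrec.list_length.comp (Primrec.fst.comp (Primrec.snd.comp .fst)))
      (Primrec.snd.comp (Primrec.unpair.comp (Primrec.fst.comp .fst)))
  · exact Primrec.eq.comp .snd (Primrec₂.natPair.comp
      (Primrec.fst.comp (Primrec.unpair.comp (Primrec.fst.comp .fst)))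
      (henc.comp (Primrec.snd.comp (Primrec.snd.comp .fst))))
  · exact henc.comp (Primrec.snd.comp (Primrec.snd.comp .fst))

theorem setOf_exists_mem_pairedOutput {U : Machine} (hU : IsOptimal U) (a : BinStr) (n : ℕ) :
    {w | ∃ qy, w ∈ pairedOutput U (Nat.pair (enc a) n) qy} =
      enc '' {y | cplx0 U (Nat.pair (enc a) (enc y)) ≤ n} := by
  ext w
  simp only [Set.mem_ofPred_eq, Prod.exists, mem_pairedOutput, Nat.unpair_pair, Set.mem_image,
    cplx0, hU.cplx_le_iff]
  grind

theorem finite_setOf_cplx0_pair_le {U : Machine} (hU : IsOptimal U) (a : BinStr) (n : ℕ) :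
    {y | cplx0 U (Nat.pair (enc a) (enc y)) ≤ n}.Finite := by
  simp only [cplx0, hU.cplx_le_iff]
  refine (finite_setOf_exists_length_le U 0 n).preimage
    (f := fun y => Nat.pair (enc a) (enc y)) fun y _ y' _ h => ?_
  exact enc_injective (Nat.pair_eq_pair.1 h).2

/-- If `C(a,b) ≤ n` then `C(b | a, n) ≤ log₂ N_a + c`,
where `N_a = #{y : C(a,y) ≤ n}`. -/
theorem plain_bound_via_count (U : Machine) (hU : IsOptimal U) :
    ∃ c : ℕ, ∀ (a b : BinStr) (n : ℕ),
      cplx0 U (Nat.pair (enc a) (enc b)) ≤ n →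
      cplx U (enc b) (Nat.pair (enc a) n) ≤
        Nat.log 2 (Set.ncard {y : BinStr | cplx0 U (Nat.pair (enc a) (enc y)) ≤ n}) + c := by
  obtain ⟨c, hc⟩ := hU.exists_cplx_le_log_ncard_add (partrec₂_pairedOutput hU.1)
  refine ⟨c, fun a b n hab => ?_⟩
  obtain ⟨q, hq, hqab⟩ := hU.cplx_le_iff.1 hab
  have hrange := setOf_exists_mem_pairedOutput hU a n
  have hb := hc (Nat.pair (enc a) n) (q, b) (enc b)
    (mem_pairedOutput.2 (by simpa using ⟨hq, hqab⟩))
    (hrange ▸ (finite_setOf_cplx0_pair_le hU a n).image enc)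
  rwa [hrange, Set.ncard_image_of_injective _ enc_injective] at hb
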